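/- Under the hypotheses on (v₁,…,v_d; λ₁,…,λ_d; c; a) stated in the context, for all j,k,l ∈ {1,…,n} and all fixed values of the coordinates of t other than tₗ, the function vⱼᵀ(Hess g₀)(ξ(t))vₖ tends to a finite limit as tₗ → −∞. -/

import Mathlib

open Filter

noncomputable section

/-- First directional derivative of `g` at `x` in direction `w`. -/
def pd1 {n : ℕ} (g : (Fin n → ℝ) → ℝ) (x w : Fin n → ℝ) : ℝ :=
  fderiv ℝ g x w

/-- Second derivative (Hessian bilinear form) of `g` at `x` applied to `w₁, w₂`. -/
def pd2 {n : ℕ} (g : (Fin n → ℝ) → ℝ) (x w₁ w₂ : Fin n → ℝ) : ℝ :=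
  fderiv ℝ (fun y => fderiv ℝ g y w₁) x w₂

/-- `ξ(t) = t₁ v₁ + ⋯ + tₙ vₙ`. -/
def xi {n : ℕ} (v : Fin n → (Fin n → ℝ)) (t : Fin n → ℝ) : Fin n → ℝ :=
  ∑ m, t m • v m

/-- The growth condition (∗) with data `(v₁,…,vₙ; a₁,…,aₙ)`. -/
def GrowthCondition {n : ℕ} (v : Fin n → (Fin n → ℝ)) (a : Fin n → ℝ)
    (g : (Fin n → ℝ) → ℝ) : Prop :=
  (∀ j : Fin n, ∀ t : Fin n → ℝ, ∃ L : ℝ,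
    Tendsto (fun s : ℝ =>
        2 * Real.exp (-2 * s) * (pd1 g (xi v (Function.update t j s)) (v j) + a j))
      atBot (nhds L) ∧
    Tendsto (fun s : ℝ =>
        Real.exp (-2 * s) * pd2 g (xi v (Function.update t j s)) (v j) (v j))
      atBot (nhds L)) ∧
  (∀ j k l : Fin n, ∀ t : Fin n → ℝ, ∃ L : ℝ,
    Tendsto (fun s : ℝ => pd2 g (xi v (Function.update t l s)) (v j) (v k))
      atBot (nhds L)) ∧
  (∀ j k : Fin n, j ≠ k → ∀ t : Fin n → ℝ,
    Tendsto (fun s : ℝ =>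
        Real.exp (-s - t k) * pd2 g (xi v (Function.update t j s)) (v j) (v k))
      atBot (nhds 0) ∧
    Tendsto (fun s : ℝ =>
        Real.exp (-(t j) - s) * pd2 g (xi v (Function.update t k s)) (v j) (v k))
      atBot (nhds 0))

/-- The affine-linear function `lᵢ(u) = ⟨u,vᵢ⟩ + λᵢ` (integer version). -/
def lfun {n d : ℕ} (v : Fin d → Fin n → ℤ) (lam : Fin d → ℤ) (i : Fin d)
    (u : Fin n → ℤ) : ℤ :=
  (∑ j, u j * v i j) + lam i

/-- The affine-linear function `lᵢ(x) = ⟨x,vᵢ⟩ + λᵢ` (real version). -/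
def lfunR {n d : ℕ} (v : Fin d → Fin n → ℤ) (lam : Fin d → ℤ) (i : Fin d)
    (x : Fin n → ℝ) : ℝ :=
  (∑ j, x j * (v i j : ℝ)) + (lam i : ℝ)

/-- Guillemin's potential
`g₀(ξ) = -(1/2) Σᵢ aᵢ log( (Σ_{u∈S} c_u lᵢ(u) e^{2⟨u,ξ⟩}) / (Σ_{u∈S} c_u e^{2⟨u,ξ⟩}) )`. -/
def gzero {n d : ℕ} (v : Fin d → Fin n → ℤ) (lam : Fin d → ℤ)
    (S : Finset (Fin n → ℤ)) (c : (Fin n → ℤ) → ℝ) (a : Fin d → ℤ)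
    (ξ : Fin n → ℝ) : ℝ :=
  -(1/2) * ∑ i : Fin d, (a i : ℝ) *
    Real.log ((∑ u ∈ S, c u * (lfun v lam i u : ℝ) * Real.exp (2 * ∑ m, (u m : ℝ) * ξ m)) /
      (∑ u ∈ S, c u * Real.exp (2 * ∑ m, (u m : ℝ) * ξ m)))

/-!
Write `Z_A(ξ) = ∑_{u ∈ S} A_u e^{2⟨u,ξ⟩}`, so that `g₀ = -½ ∑ᵢ aᵢ (log Z_{c lᵢ} - log Z_c)`. By (i) and (ii)
each weight family `c lᵢ` and `c` is nonnegative on `S` and positive somewhere, so every `Z` is positive.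
The Hessian of `log Z_A` at `ξ` in the directions `w₁, w₂` is the covariance of `u ↦ 2⟨u,w₁⟩` and
`u ↦ 2⟨u,w₂⟩` under the weights `A_u e^{2⟨u,ξ⟩}`, i.e. the weighted average of `φ(u) (ψ(u) - ψ(u'))` over pairs
`(u, u')`. Along the ray `ξ = ξ₀ + s vₗ` the pair weights are `p_{u,u'} e^{s (b_u + b_{u'})}` with `p ≥ 0`, and
as `s → -∞` such an average converges to the average over the pairs of smallest exponent.
-/

open Real Finset Topology

section WeightedMoments

variable {ι : Type*}

def weightedAvg (S : Finset ι) (q f : ι → ℝ) : ℝ :=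
  (∑ u ∈ S, q u * f u) / ∑ u ∈ S, q u

def weightedCov (S : Finset ι) (q φ ψ : ι → ℝ) : ℝ :=
  ((∑ u ∈ S, q u * (φ u * ψ u)) * (∑ u ∈ S, q u) -
    (∑ u ∈ S, q u * φ u) * (∑ u ∈ S, q u * ψ u)) / (∑ u ∈ S, q u) ^ 2

theorem weightedCov_eq_weightedAvg_product (S : Finset ι) (q φ ψ : ι → ℝ) :
    weightedCov S q φ ψ =
      weightedAvg (S ×ˢ S) (fun p => q p.1 * q p.2) (fun p => φ p.1 * (ψ p.1 - ψ p.2)) := by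
  simp only [weightedCov, weightedAvg, sum_product, ← sum_mul_sum, sq]
  congr 1
  simp only [sum_mul_sum, ← sum_sub_distrib]
  exact sum_congr rfl fun u _ => sum_congr rfl fun u' _ => by ring

theorem tendsto_sum_mul_exp_atBot {S : Finset ι} {p b : ι → ℝ} {β : ℝ}
    (hβ : ∀ u ∈ S, p u ≠ 0 → β ≤ b u) :
    Tendsto (fun s : ℝ => ∑ u ∈ S, p u * exp (s * (b u - β))) atBot
      (𝓝 (∑ u ∈ S with b u = β, p u)) := by
  rw [sum_filter]
  refine tendsto_finsetSum _ fun u hu => ?_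
  by_cases hp : p u = 0
  · simp [hp]
  obtain hb | hb := (hβ u hu hp).eq_or_lt
  · simp [← hb]
  · have hexp : Tendsto (fun s : ℝ => exp (s * (b u - β))) atBot (𝓝 0) :=
      tendsto_exp_atBot.comp (tendsto_id.atBot_mul_const' (sub_pos.2 hb))
    simpa [hb.ne'] using hexp.const_mul (p u)

theorem exists_tendsto_weightedAvg_mul_exp_atBot {S : Finset ι} {p : ι → ℝ}
    (hp : ∀ u ∈ S, 0 ≤ p u) (hpos : ∃ u ∈ S, 0 < p u) (b f : ι → ℝ) :
    ∃ L, Tendsto (fun s : ℝ => weightedAvg S (fun u => p u * exp (s * b u)) f) atBot (𝓝 L) := by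
  classical
  have hT : (S.filter fun u => 0 < p u).Nonempty := by simpa [Finset.Nonempty] using hpos
  obtain ⟨u₀, hu₀, hβ⟩ := exists_mem_eq_inf' hT b
  set β := (S.filter fun u => 0 < p u).inf' hT b
  rw [mem_filter] at hu₀
  have hmin : ∀ u ∈ S, p u ≠ 0 → β ≤ b u := fun u hu hpu =>
    inf'_le _ (mem_filter.2 ⟨hu, (hp u hu).lt_of_ne' hpu⟩)
  have hden : 0 < ∑ u ∈ S with b u = β, p u :=
    sum_pos' (fun u hu => hp u (mem_filter.1 hu).1) ⟨u₀, mem_filter.2 ⟨hu₀.1, hβ.symm⟩, hu₀.2⟩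
  -- dividing numerator and denominator by `exp (s * β)` isolates the leading exponent
  have hshift : ∀ s : ℝ, weightedAvg S (fun u => p u * exp (s * b u)) f =
      (∑ u ∈ S, p u * f u * exp (s * (b u - β))) / ∑ u ∈ S, p u * exp (s * (b u - β)) := by
    intro s
    have hsplit : ∀ u, exp (s * b u) = exp (s * β) * exp (s * (b u - β)) := fun u => by
      rw [← exp_add]; ring_nf
    conv_rhs => rw [← mul_div_mul_left _ _ (exp_pos (s * β)).ne', mul_sum, mul_sum]
    rw [weightedAvg]
    congr 1 <;> exact sum_congr rfl fun u _ => by rw [hsplit]; ring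
  refine ⟨_, ((tendsto_sum_mul_exp_atBot (p := fun u => p u * f u) fun u hu h =>
    hmin u hu (left_ne_zero_of_mul h)).div (tendsto_sum_mul_exp_atBot hmin) hden.ne').congr
    fun s => (hshift s).symm⟩

theorem exists_tendsto_weightedCov_mul_exp_atBot {S : Finset ι} {p : ι → ℝ}
    (hp : ∀ u ∈ S, 0 ≤ p u) (hpos : ∃ u ∈ S, 0 < p u) (b φ ψ : ι → ℝ) :
    ∃ L, Tendsto (fun s : ℝ => weightedCov S (fun u => p u * exp (s * b u)) φ ψ) atBot
      (𝓝 L) := by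
  obtain ⟨u₀, hu₀, hpu₀⟩ := hpos
  obtain ⟨L, hL⟩ := exists_tendsto_weightedAvg_mul_exp_atBot (S := S ×ˢ S)
    (p := fun q => p q.1 * p q.2)
    (fun q hq => mul_nonneg (hp _ (mem_product.1 hq).1) (hp _ (mem_product.1 hq).2))
    ⟨(u₀, u₀), mem_product.2 ⟨hu₀, hu₀⟩, mul_pos hpu₀ hpu₀⟩
    (fun q => b q.1 + b q.2) (fun q => φ q.1 * (ψ q.1 - ψ q.2))
  refine ⟨L, hL.congr fun s => ?_⟩
  rw [weightedCov_eq_weightedAvg_product]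
  congr 1
  funext q
  rw [mul_add, exp_add]
  ring

end WeightedMoments

section SecondDerivative

variable {n : ℕ} {f g : (Fin n → ℝ) → ℝ}

theorem ContDiff.differentiable_fderiv_apply (hf : ContDiff ℝ 2 f) (w : Fin n → ℝ) :
    Differentiable ℝ fun y => fderiv ℝ f y w :=
  ((hf.fderiv_right (m := 1) le_rfl).differentiable one_ne_zero).clm_apply
    (differentiable_const w)

theorem pd2_sub (hf : ContDiff ℝ 2 f) (hg : ContDiff ℝ 2 g) (x w₁ w₂ : Fin n → ℝ) :
    pd2 (fun y => f y - g y) x w₁ w₂ = pd2 f x w₁ w₂ - pd2 g x w₁ w₂ := by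
  have h : (fun y => fderiv ℝ (fun y => f y - g y) y w₁) =
      fun y => fderiv ℝ f y w₁ - fderiv ℝ g y w₁ := funext fun y => by
    rw [fderiv_fun_sub (hf.differentiable two_ne_zero y) (hg.differentiable two_ne_zero y)]
    rfl
  rw [pd2, h, fderiv_fun_sub (hf.differentiable_fderiv_apply w₁ x)
    (hg.differentiable_fderiv_apply w₁ x)]
  rfl

theorem pd2_const_mul (hf : ContDiff ℝ 2 f) (a : ℝ) (x w₁ w₂ : Fin n → ℝ) :
    pd2 (fun y => a * f y) x w₁ w₂ = a * pd2 f x w₁ w₂ := by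
  have h : (fun y => fderiv ℝ (fun y => a * f y) y w₁) = fun y => a * fderiv ℝ f y w₁ :=
    funext fun y => by rw [fderiv_const_mul (hf.differentiable two_ne_zero y)]; rfl
  rw [pd2, h, fderiv_const_mul (hf.differentiable_fderiv_apply w₁ x)]
  rfl

theorem pd2_fun_sum {ι : Type*} {s : Finset ι} {F : ι → (Fin n → ℝ) → ℝ}
    (hF : ∀ i ∈ s, ContDiff ℝ 2 (F i)) (x w₁ w₂ : Fin n → ℝ) :
    pd2 (fun y => ∑ i ∈ s, F i y) x w₁ w₂ = ∑ i ∈ s, pd2 (F i) x w₁ w₂ := by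
  have h : (fun y => fderiv ℝ (fun y => ∑ i ∈ s, F i y) y w₁) =
      fun y => ∑ i ∈ s, fderiv ℝ (F i) y w₁ := funext fun y => by
    rw [fderiv_fun_sum fun i hi => (hF i hi).differentiable two_ne_zero y]
    simp
  rw [pd2, h, fderiv_fun_sum fun i hi => (hF i hi).differentiable_fderiv_apply w₁ x]
  simp [pd2]

end SecondDerivative

section LogSumExp

variable {ι E : Type*} [NormedAddCommGroup E] [NormedSpace ℝ E]
  (S : Finset ι) (A : ι → ℝ) (ℓ : ι → E →L[ℝ] ℝ)

def expSum (x : E) : ℝ :=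
  ∑ u ∈ S, A u * exp (ℓ u x)

def logExpSum (x : E) : ℝ :=
  log (expSum S A ℓ x)

theorem hasFDerivAt_expSum (x : E) :
    HasFDerivAt (expSum S A ℓ) (∑ u ∈ S, (A u * exp (ℓ u x)) • ℓ u) x :=
  HasFDerivAt.fun_sum fun u _ => by
    simpa only [smul_smul] using ((ℓ u).hasFDerivAt (x := x)).exp.const_mul (A u)

theorem contDiff_expSum {k : WithTop ℕ∞} : ContDiff ℝ k (expSum S A ℓ) := by
  unfold expSum
  fun_prop

theorem fderiv_expSum_apply (x w : E) :
    fderiv ℝ (expSum S A ℓ) x w = expSum S (fun u => A u * ℓ u w) ℓ x := by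
  rw [(hasFDerivAt_expSum S A ℓ x).fderiv]
  simp only [expSum, FunLike.coe_sum, Finset.sum_apply,
    FunLike.coe_smul, Pi.smul_apply, smul_eq_mul]
  exact sum_congr rfl fun u _ => by ring

variable {A}

theorem expSum_pos (hA : ∀ u ∈ S, 0 ≤ A u) (hApos : ∃ u ∈ S, 0 < A u) (x : E) :
    0 < expSum S A ℓ x :=
  sum_pos' (fun u hu => mul_nonneg (hA u hu) (exp_pos _).le)
    (hApos.imp fun _ ⟨hu, h⟩ => ⟨hu, mul_pos h (exp_pos _)⟩)

theorem contDiff_logExpSum (hA : ∀ u ∈ S, 0 ≤ A u) (hApos : ∃ u ∈ S, 0 < A u)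
    {k : WithTop ℕ∞} : ContDiff ℝ k (logExpSum S A ℓ) :=
  (contDiff_expSum S A ℓ).log fun x => (expSum_pos S ℓ hA hApos x).ne'

end LogSumExp

section LogSumExpHessian

variable {ι : Type*} {n : ℕ} {S : Finset ι} {A : ι → ℝ} {ℓ : ι → (Fin n → ℝ) →L[ℝ] ℝ}

theorem pd2_logExpSum (hpos : ∀ x, 0 < expSum S A ℓ x) (x w₁ w₂ : Fin n → ℝ) :
    pd2 (logExpSum S A ℓ) x w₁ w₂ =
      weightedCov S (fun u => A u * exp (ℓ u x)) (fun u => ℓ u w₁) (fun u => ℓ u w₂) := by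
  have hE : ∀ B y, HasFDerivAt (expSum S B ℓ) (fderiv ℝ (expSum S B ℓ) y) y := fun B y =>
    ((contDiff_expSum S B ℓ (k := 1)).differentiable one_ne_zero y).hasFDerivAt
  have hgrad : (fun y => fderiv ℝ (logExpSum S A ℓ) y w₁) =
      fun y => expSum S (fun u => A u * ℓ u w₁) ℓ y * (expSum S A ℓ y)⁻¹ := funext fun y => by
    have hlog : HasFDerivAt (logExpSum S A ℓ) _ y := (hE A y).log (hpos y).ne'
    rw [hlog.fderiv, smul_apply, fderiv_expSum_apply, smul_eq_mul, mul_comm]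
  have hinv : HasFDerivAt (fun y => (expSum S A ℓ y)⁻¹) _ x :=
    (hasDerivAt_inv (hpos x).ne').comp_hasFDerivAt x (hE A x)
  rw [pd2, hgrad, ((hE _ x).fun_mul hinv).fderiv]
  simp only [add_apply, smul_apply, fderiv_expSum_apply, smul_eq_mul]
  have hZ := (hpos x).ne'
  simp only [weightedCov, expSum] at hZ ⊢
  field_simp
  simp only [mul_assoc, mul_comm, mul_left_comm]
  ring

theorem exists_tendsto_pd2_logExpSum_atBot (hA : ∀ u ∈ S, 0 ≤ A u) (hApos : ∃ u ∈ S, 0 < A u)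
    (x₀ w w₁ w₂ : Fin n → ℝ) :
    ∃ L, Tendsto (fun s : ℝ => pd2 (logExpSum S A ℓ) (x₀ + s • w) w₁ w₂) atBot
      (𝓝 L) := by
  obtain ⟨L, hL⟩ := exists_tendsto_weightedCov_mul_exp_atBot
    (p := fun u => A u * exp (ℓ u x₀)) (fun u hu => mul_nonneg (hA u hu) (exp_pos _).le)
    (hApos.imp fun _ ⟨hu, h⟩ => ⟨hu, mul_pos h (exp_pos _)⟩)
    (fun u => ℓ u w) (fun u => ℓ u w₁) (fun u => ℓ u w₂)
  refine ⟨L, hL.congr fun s => ?_⟩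
  rw [pd2_logExpSum (expSum_pos S ℓ hA hApos)]
  congr 1
  funext u
  rw [map_add, map_smul, smul_eq_mul, exp_add, mul_comm s, mul_assoc]

end LogSumExpHessian

section Guillemin

variable {n d : ℕ}

def doublePairing (u : Fin n → ℤ) : (Fin n → ℝ) →L[ℝ] ℝ :=
  ∑ m, (2 * (u m : ℝ)) • ContinuousLinearMap.proj m

theorem doublePairing_apply (u : Fin n → ℤ) (x : Fin n → ℝ) :
    doublePairing u x = 2 * ∑ m, (u m : ℝ) * x m := by
  simp [doublePairing, mul_sum, mul_assoc]

theorem xi_update_eq_add_smul (v : Fin n → Fin n → ℝ) (t : Fin n → ℝ) (l : Fin n)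
    (s : ℝ) : xi v (Function.update t l s) = xi v (Function.update t l 0) + s • v l := by
  simp only [xi, Fintype.sum_eq_add_sum_compl l, Function.update_self, zero_smul, zero_add]
  rw [add_comm]
  congr 1
  exact sum_congr rfl fun m hm => by
    rw [Function.update_of_ne (by simpa using hm), Function.update_of_ne (by simpa using hm)]

variable (v : Fin d → Fin n → ℤ) (lam : Fin d → ℤ) (S : Finset (Fin n → ℤ))
  (c : (Fin n → ℤ) → ℝ) (a : Fin d → ℤ)

theorem gzero_eq_sum_logExpSum_sub
    (hpos : ∀ i ξ, 0 < expSum S (fun u => c u * lfun v lam i u) doublePairing ξ)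
    (hposc : ∀ ξ, 0 < expSum S c doublePairing ξ) :
    gzero v lam S c a = fun ξ => -(1 / 2) * ∑ i, (a i : ℝ) *
      (logExpSum S (fun u => c u * lfun v lam i u) doublePairing ξ -
        logExpSum S c doublePairing ξ) := by
  funext ξ
  have hexp : ∀ A : (Fin n → ℤ) → ℝ,
      expSum S A doublePairing ξ = ∑ u ∈ S, A u * exp (2 * ∑ m, (u m : ℝ) * ξ m) := fun A => by
    simp only [expSum, doublePairing_apply]
  rw [gzero]
  congr 1
  refine sum_congr rfl fun i _ => ?_
  rw [logExpSum, logExpSum, ← log_div (hpos i ξ).ne' (hposc ξ).ne', hexp, hexp]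

theorem pd2_gzero (hC : ∀ i, ∀ u ∈ S, 0 ≤ c u * lfun v lam i u)
    (hCpos : ∀ i, ∃ u ∈ S, 0 < c u * lfun v lam i u)
    (hc : ∀ u ∈ S, 0 ≤ c u) (hcpos : ∃ u ∈ S, 0 < c u) (ξ w₁ w₂ : Fin n → ℝ) :
    pd2 (gzero v lam S c a) ξ w₁ w₂ = -(1 / 2) * ∑ i, (a i : ℝ) *
      (pd2 (logExpSum S (fun u => c u * lfun v lam i u) doublePairing) ξ w₁ w₂ -
        pd2 (logExpSum S c doublePairing) ξ w₁ w₂) := by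
  have hdiffC := fun i => contDiff_logExpSum S doublePairing (hC i) (hCpos i) (k := 2)
  have hdiffc := contDiff_logExpSum S doublePairing hc hcpos (k := 2)
  rw [gzero_eq_sum_logExpSum_sub v lam S c a
      (fun i => expSum_pos S doublePairing (hC i) (hCpos i)) (expSum_pos S doublePairing hc hcpos),
    pd2_const_mul (by fun_prop), pd2_fun_sum fun i _ => by fun_prop]
  congr 1
  refine sum_congr rfl fun i _ => ?_
  rw [pd2_const_mul (by fun_prop), pd2_sub (hdiffC i) hdiffc]

theorem exists_pos_mul_lfun (hnd : n ≤ d) {v : Fin d → Fin n → ℤ} {lam : Fin d → ℤ}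
    {S : Finset (Fin n → ℤ)} {c : (Fin n → ℤ) → ℝ}
    (hu0 : ∃ u₀ ∈ S, 0 < c u₀ ∧
      (∀ j : Fin n, lfun v lam (Fin.castLE hnd j) u₀ = 0) ∧
      (∀ i : Fin d, n ≤ (i : ℕ) → 1 ≤ lfun v lam i u₀))
    (huk : ∀ k : Fin n, ∃ u ∈ S, 0 < c u ∧
      lfun v lam (Fin.castLE hnd k) u = 1 ∧
      (∀ j : Fin n, j ≠ k → lfun v lam (Fin.castLE hnd j) u = 0))
    (i : Fin d) : ∃ u ∈ S, 0 < c u * lfun v lam i u := by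
  by_cases hi : (i : ℕ) < n
  · obtain ⟨u, hu, hcu, hlu, -⟩ := huk ⟨i, hi⟩
    refine ⟨u, hu, ?_⟩
    rwa [show i = Fin.castLE hnd ⟨i, hi⟩ from rfl, hlu, Int.cast_one, mul_one]
  · obtain ⟨u₀, hu₀, hcu₀, -, hlu₀⟩ := hu0
    exact ⟨u₀, hu₀, mul_pos hcu₀ (by exact_mod_cast hlu₀ i (not_lt.1 hi))⟩

end Guillemin

theorem gzero_hessian_has_limit_general (n d : ℕ) (hnd : n ≤ d)
    (v : Fin d → Fin n → ℤ) (lam : Fin d → ℤ)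
    (S : Finset (Fin n → ℤ))
    (hS : ∀ u : Fin n → ℤ, u ∈ S ↔ ∀ i : Fin d, 0 ≤ lfun v lam i u)
    (c : (Fin n → ℤ) → ℝ) (hc : ∀ u ∈ S, 0 ≤ c u)
    (hu0 : ∃ u₀ ∈ S, 0 < c u₀ ∧
      (∀ j : Fin n, lfun v lam (Fin.castLE hnd j) u₀ = 0) ∧
      (∀ i : Fin d, n ≤ (i : ℕ) → 1 ≤ lfun v lam i u₀))
    (huk : ∀ k : Fin n, ∃ u ∈ S, 0 < c u ∧
      lfun v lam (Fin.castLE hnd k) u = 1 ∧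
      (∀ j : Fin n, j ≠ k → lfun v lam (Fin.castLE hnd j) u = 0))
    (a : Fin d → ℤ)
    (j k l : Fin n) (t : Fin n → ℝ) :
    ∃ L : ℝ,
      Tendsto (fun s : ℝ =>
          pd2 (gzero v lam S c a)
            (xi (fun m p => (v (Fin.castLE hnd m) p : ℝ)) (Function.update t l s))
            (fun p => (v (Fin.castLE hnd j) p : ℝ))
            (fun p => (v (Fin.castLE hnd k) p : ℝ)))
        atBot (nhds L) := by
  set vR : Fin n → Fin n → ℝ := fun m p => (v (Fin.castLE hnd m) p : ℝ)
  have hC : ∀ i, ∀ u ∈ S, 0 ≤ c u * lfun v lam i u := fun i u hu =>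
    mul_nonneg (hc u hu) (Int.cast_nonneg ((hS u).1 hu i))
  have hCpos := exists_pos_mul_lfun hnd hu0 huk
  have hcpos : ∃ u ∈ S, 0 < c u := hu0.imp fun _ ⟨hu, hcu, _⟩ => ⟨hu, hcu⟩
  have hray := fun A hA hApos => exists_tendsto_pd2_logExpSum_atBot (S := S) (A := A)
    (ℓ := doublePairing) hA hApos (xi vR (Function.update t l 0)) (vR l) (vR j) (vR k)
  choose LC hLC using fun i => hray _ (hC i) (hCpos i)
  obtain ⟨Lc, hLc⟩ := hray c hc hcpos
  refine ⟨-(1 / 2) * ∑ i, (a i : ℝ) * (LC i - Lc), Tendsto.congr (fun s => ?_)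
    ((tendsto_finsetSum univ fun i _ => ((hLC i).sub hLc).const_mul (a i : ℝ)).const_mul _)⟩
  rw [pd2_gzero v lam S c a hC hCpos hc hcpos, xi_update_eq_add_smul vR t l s]

/-- for all `j,k,l` and fixed values of the coordinates of `t` other than `tₗ`,
the function `vⱼᵀ(Hess g₀)(ξ(t))vₖ` tends to a finite limit as `tₗ → −∞`. -/
theorem gzero_hessian_has_limit (n d : ℕ) (hnd : n ≤ d)
    (v : Fin d → Fin n → ℤ) (lam : Fin d → ℤ)
    (S : Finset (Fin n → ℤ))
    (hS : ∀ u : Fin n → ℤ, u ∈ S ↔ ∀ i : Fin d, 0 ≤ lfun v lam i u)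
    (hbdd : Bornology.IsBounded {x : Fin n → ℝ | ∀ i : Fin d, 0 ≤ lfunR v lam i x})
    (c : (Fin n → ℤ) → ℝ) (hc : ∀ u ∈ S, 0 ≤ c u)
    (hbasis : IsUnit (Matrix.of fun j k : Fin n => v (Fin.castLE hnd j) k).det)
    (hu0 : ∃ u₀ ∈ S, 0 < c u₀ ∧
      (∀ j : Fin n, lfun v lam (Fin.castLE hnd j) u₀ = 0) ∧
      (∀ i : Fin d, n ≤ (i : ℕ) → 1 ≤ lfun v lam i u₀))
    (huk : ∀ k : Fin n, ∃ u ∈ S, 0 < c u ∧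
      lfun v lam (Fin.castLE hnd k) u = 1 ∧
      (∀ j : Fin n, j ≠ k → lfun v lam (Fin.castLE hnd j) u = 0))
    (a : Fin d → ℤ)
    (j k l : Fin n) (t : Fin n → ℝ) :
    ∃ L : ℝ,
      Tendsto (fun s : ℝ =>
          pd2 (gzero v lam S c a)
            (xi (fun m p => (v (Fin.castLE hnd m) p : ℝ)) (Function.update t l s))
            (fun p => (v (Fin.castLE hnd j) p : ℝ))
            (fun p => (v (Fin.castLE hnd k) p : ℝ)))
        atBot (nhds L) :=
  gzero_hessian_has_limit_general n d hnd v lam S hS c hc hu0 huk a j k l t
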